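/- Let T be a tree on vertex set V, let v be a vertex with an edge to u, and suppose swapping edge vu to vw (where u and w lie in the component B of T minus edge vu not containing v) strictly decreases v's eccentricity. Let A be the component of T minus edge vu containing v. Then for every vertex x in A, no vertex y in A attains x's eccentricity, i.e., for all x, y in A, d_T(x,y) < ecc_T(x). -/

import Mathlib

/-!
Let `A ∋ v` and `B ∋ u, w` be the two sides of the bridge `vu`. Collapsing `B` onto `v` maps every
walk of the swapped tree `T'` to a walk of `T - vu` that is no longer, so the swap does not shorten
any distance from `v` to a vertex of `A`. As the swap lowers `ecc v`, every `y ∈ A` satisfies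
`d(v, y) < ecc_T v = d(v, b)` for some `b ∈ B`. Every path from `x ∈ A` to `b` passes through `v`,
hence `d(x, y) ≤ d(x, v) + d(v, y) < d(x, v) + d(v, b) = d(x, b) ≤ ecc_T x`.
-/

namespace NCG
open SimpleGraph

variable {V : Type*}

noncomputable def ecc [Fintype V] (G : SimpleGraph V) (x : V) : ℕ :=
  Finset.univ.sup fun y => G.dist x y

noncomputable def diam [Fintype V] (G : SimpleGraph V) : ℕ :=
  Finset.univ.sup fun x => ecc G x

noncomputable def rad [Fintype V] (G : SimpleGraph V) : ℕ :=
  sInf (Set.range (ecc G))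

end NCG

namespace SimpleGraph

variable {V : Type*}

section Contraction

variable {W : Type*} {G : SimpleGraph V} {H : SimpleGraph W}

lemma Walk.exists_length_le_of_adj_imp_eq_or_adj (f : V → W)
    (hf : ∀ ⦃a c⦄, G.Adj a c → f a = f c ∨ H.Adj (f a) (f c)) {a b : V} (p : G.Walk a b) :
    ∃ q : H.Walk (f a) (f b), q.length ≤ p.length := by
  induction p with
  | nil => exact ⟨Walk.nil, le_rfl⟩
  | @cons a c b hac p ih =>
    obtain ⟨q, hq⟩ := ih
    rcases hf hac with hfac | hfac
    · exact ⟨q.copy hfac.symm rfl, by simp only [Walk.length_copy, Walk.length_cons]; omega⟩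
    · exact ⟨Walk.cons hfac q, by simp only [Walk.length_cons]; omega⟩

lemma dist_le_dist_of_adj_imp_eq_or_adj (f : V → W)
    (hf : ∀ ⦃a c⦄, G.Adj a c → f a = f c ∨ H.Adj (f a) (f c)) {a b : V} (hab : G.Reachable a b) :
    H.dist (f a) (f b) ≤ G.dist a b := by
  obtain ⟨p, hp⟩ := hab.exists_walk_length_eq_dist
  obtain ⟨q, hq⟩ := p.exists_length_le_of_adj_imp_eq_or_adj f hf
  exact (H.dist_le q).trans (hp ▸ hq)

end Contraction

lemma dist_le_dist_of_edgeSet_subset_union {G H : SimpleGraph V} {v w b : V}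
    (hHG : H.edgeSet ⊆ G.edgeSet ∪ {s(v, w)}) (hvw : ¬G.Reachable v w)
    (hGb : G.Reachable v b) (hHb : H.Reachable v b) :
    G.dist v b ≤ H.dist v b := by
  classical
  -- retract everything outside the component of `v` onto `v`
  let f : V → V := fun z ↦ if G.Reachable v z then z else v
  have hf : ∀ ⦃a c⦄, H.Adj a c → f a = f c ∨ G.Adj (f a) (f c) := by
    intro a c hac
    rcases hHG (H.mem_edgeSet.mpr hac) with hG | hvw'
    · have hGac : G.Adj a c := hG
      by_cases ha : G.Reachable v a
      · have hc : G.Reachable v c := ha.trans hGac.reachable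
        simp only [f, if_pos ha, if_pos hc]
        exact Or.inr hGac
      · have hc : ¬G.Reachable v c := fun hc ↦ ha (hc.trans hGac.reachable.symm)
        simp only [f, if_neg ha, if_neg hc, true_or]
    · rcases Sym2.eq_iff.mp hvw' with ⟨rfl, rfl⟩ | ⟨rfl, rfl⟩ <;>
        simp only [f, if_pos (Reachable.refl _), if_neg hvw, true_or]
  have hfv : f v = v := if_pos (Reachable.refl v)
  have hfb : f b = b := if_pos hGb
  simpa only [hfv, hfb] using dist_le_dist_of_adj_imp_eq_or_adj f hf hHb

lemma Walk.mem_support_of_not_reachable_deleteEdges {G : SimpleGraph V} {v u x b : V}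
    (p : G.Walk x b) (hx : (G.deleteEdges {s(v, u)}).Reachable v x)
    (hb : ¬(G.deleteEdges {s(v, u)}).Reachable v b) : v ∈ p.support := by
  by_contra hv
  have he : s(v, u) ∉ p.edges := fun he ↦ hv (p.fst_mem_support_of_mem_edges he)
  exact hb (hx.trans (p.toDeleteEdge _ he).reachable)

lemma dist_add_dist_le_of_forall_mem_support {G : SimpleGraph V} {x v b : V}
    (hxb : G.Reachable x b) (hv : ∀ p : G.Walk x b, v ∈ p.support) :
    G.dist x v + G.dist v b ≤ G.dist x b := by
  classical
  obtain ⟨p, hp⟩ := hxb.exists_walk_length_eq_dist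
  have hsplit := congrArg Walk.length (p.take_spec (hv p))
  rw [Walk.length_append] at hsplit
  calc G.dist x v + G.dist v b
      ≤ (p.takeUntil v (hv p)).length + (p.dropUntil v (hv p)).length :=
        Nat.add_le_add (G.dist_le _) (G.dist_le _)
    _ = G.dist x b := hsplit.trans hp

end SimpleGraph

namespace NCG
open SimpleGraph

variable {V : Type*}

lemma dist_le_ecc [Fintype V] (G : SimpleGraph V) (x y : V) : G.dist x y ≤ ecc G x :=
  Finset.le_sup (Finset.mem_univ y)

lemma exists_dist_eq_ecc [Fintype V] (G : SimpleGraph V) (x : V) :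
    ∃ y, G.dist x y = ecc G x := by
  have : Nonempty V := ⟨x⟩
  obtain ⟨y, -, hy⟩ := Finset.exists_mem_eq_sup Finset.univ Finset.univ_nonempty (G.dist x)
  exact ⟨y, hy.symm⟩

theorem stmt0_general [Fintype V] (T : SimpleGraph V) (hT : T.IsTree)
    (v u w : V) (hvu : T.Adj v u)
    (hw : (T.deleteEdges {s(v, u)}).Reachable u w)
    (T' : SimpleGraph V)
    (hT'edges : T'.edgeSet = (T.edgeSet \ {s(v, u)}) ∪ {s(v, w)})
    (himp : ecc T' v < ecc T v) :
    ∀ x y : V, (T.deleteEdges {s(v, u)}).Reachable v x →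
      (T.deleteEdges {s(v, u)}).Reachable v y →
      T.dist x y < ecc T x := by
  intro x y hx hy
  set G := T.deleteEdges {s(v, u)}
  have hvw : ¬G.Reachable v w := fun h ↦
    isAcyclic_iff_forall_adj_isBridge.mp hT.isAcyclic hvu (h.trans hw.symm)
  have hT' : T'.edgeSet = G.edgeSet ∪ {s(v, w)} := by rw [hT'edges, edgeSet_deleteEdges]
  have hGT' : G ≤ T' := by rw [← edgeSet_subset_edgeSet, hT']; exact Set.subset_union_left
  have closer : ∀ z, G.Reachable v z → T.dist v z < ecc T v := fun z hz ↦ calc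
    T.dist v z ≤ G.dist v z := hz.dist_anti (deleteEdges_le _)
    _ ≤ T'.dist v z := dist_le_dist_of_edgeSet_subset_union hT'.subset hvw hz (hz.mono hGT')
    _ ≤ ecc T' v := dist_le_ecc T' v z
    _ < ecc T v := himp
  obtain ⟨b, hb⟩ := exists_dist_eq_ecc T v
  have hbB : ¬G.Reachable v b := fun h ↦ (closer b h).ne hb
  calc T.dist x y ≤ T.dist x v + T.dist v y := hT.connected.dist_triangle
    _ < T.dist x v + T.dist v b := by rw [hb]; exact Nat.add_lt_add_left (closer y hy) _
    _ ≤ T.dist x b := dist_add_dist_le_of_forall_mem_support (hT.connected x b)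
        fun p ↦ p.mem_support_of_not_reachable_deleteEdges hx hbB
    _ ≤ ecc T x := dist_le_ecc T x b

/-- after an improving eccentricity swap of edge vu to vw (u, w in
component B), every vertex x in the component A of T − vu containing v has its
eccentricity realized outside A: for all x, y in A, d_T(x,y) < ecc_T(x). -/
theorem stmt0 [Fintype V] [DecidableEq V] (T : SimpleGraph V) (hT : T.IsTree)
    (v u w : V) (hvu : T.Adj v u)
    (hw : (T.deleteEdges {s(v, u)}).Reachable u w)
    (T' : SimpleGraph V)
    (hT'edges : T'.edgeSet = (T.edgeSet \ {s(v, u)}) ∪ {s(v, w)})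
    (himp : ecc T' v < ecc T v) :
    ∀ x y : V, (T.deleteEdges {s(v, u)}).Reachable v x →
      (T.deleteEdges {s(v, u)}).Reachable v y →
      T.dist x y < ecc T x :=
  stmt0_general T hT v u w hvu hw T' hT'edges himp

end NCG
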